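/- Compatibility of Hopf ideals with the Birkhoff decomposition: let H be a connected graded commutative Hopf algebra, I a graded Hopf ideal, K = K₋ ⊕ K₊ with Rota–Baxter projection T onto K₋, and φ : H → K an algebra homomorphism with φ(I) = 0. Then both parts of the Birkhoff decomposition vanish on I: φ₋(I) = 0 and φ₊(I) = 0. -/

import Mathlib

open TensorProduct

/-- The image of `p ⊗ q` inside `H ⊗ H`, for submodules `p q : Submodule k H`. -/
noncomputable def subTmul {k H : Type*} [CommRing k] [AddCommGroup H] [Module k H]
    (p q : Submodule k H) : Submodule k (H ⊗[k] H) :=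
  LinearMap.range (TensorProduct.mapIncl p q)

/-- Convolution product of linear maps from a coalgebra to an algebra. -/
noncomputable def conv {k H A : Type*} [CommRing k] [AddCommGroup H] [Module k H]
    [Coalgebra k H] [Ring A] [Algebra k A] (f g : H →ₗ[k] A) : H →ₗ[k] A :=
  LinearMap.mul' k A ∘ₗ TensorProduct.map f g ∘ₗ Coalgebra.comul

/-!
Induction on the degree `n` of `x ∈ I`. The recursion gives
`φ₋(x) = -T(φ(x) + Σ φ₋(x')φ(x''))`, and `φ(x) = 0`. By connectedness and the counit axiom the
`(n, 0)`-component of `Δx` is `x ⊗ 1`, so `Δx - x ⊗ 1` is the image of `Δx` under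
`(projection onto degrees < n) ⊗ id`. As `I` is graded, this operator maps
`Δ(I) ⊆ I ⊗ H + H ⊗ I` into `(I ∩ H_{<n}) ⊗ H + H ⊗ I`, on which `φ₋ ⊗ φ` vanishes by induction
and `φ(I) = 0`; the remaining term `1 ⊗ x` is killed by `φ(x) = 0`. Once `φ₋(I) = 0`, the same
inclusion `Δ(I) ⊆ I ⊗ H + H ⊗ I` gives `φ₊(I) = (φ₋ * φ)(I) = 0`.
-/

section TensorSubmodules

variable {k H : Type*} [CommRing k] [AddCommGroup H] [Module k H]

theorem subTmul_le_iff {p q : Submodule k H} {N : Submodule k (H ⊗[k] H)} :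
    subTmul p q ≤ N ↔ ∀ a ∈ p, ∀ b ∈ q, a ⊗ₜ[k] b ∈ N := by
  rw [subTmul, range_mapIncl, Submodule.map₂_le]
  rfl

theorem tmul_mem_subTmul {p q : Submodule k H} {a b : H} (ha : a ∈ p) (hb : b ∈ q) :
    a ⊗ₜ[k] b ∈ subTmul p q :=
  subTmul_le_iff.1 le_rfl a ha b hb

theorem subTmul_span_singleton_le (S : Submodule k H) (e : H) :
    subTmul S (Submodule.span k {e}) ≤ S.map ((mk k H H).flip e) := by
  refine subTmul_le_iff.2 fun a ha b hb => ?_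
  obtain ⟨c, rfl⟩ := Submodule.mem_span_singleton.1 hb
  exact ⟨c • a, S.smul_mem c ha, by simp⟩

theorem subTmul_sup_subTmul_le_ker_mul'_map {A : Type*} [Ring A] [Algebra k A]
    {p q : Submodule k H} {f g : H →ₗ[k] A} (hf : p ≤ LinearMap.ker f) (hg : q ≤ LinearMap.ker g) :
    subTmul p ⊤ ⊔ subTmul ⊤ q ≤ LinearMap.ker (LinearMap.mul' k A ∘ₗ map f g) := by
  refine sup_le (subTmul_le_iff.2 fun a ha b _ => ?_) (subTmul_le_iff.2 fun a _ b hb => ?_)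
  · simp [LinearMap.mem_ker.1 (hf ha)]
  · simp [LinearMap.mem_ker.1 (hg hb)]

end TensorSubmodules

section GradedProjections

variable {k H ι : Type*} [CommRing k] [AddCommGroup H] [Module k H] [DecidableEq ι]
  (ℬ : ι → Submodule k H) [DirectSum.Decomposition ℬ]

noncomputable def gradedProj (i : ι) : H →ₗ[k] H :=
  (ℬ i).subtype ∘ₗ DirectSum.component k ι (fun i => ℬ i) i ∘ₗ
    (DirectSum.decomposeLinearEquiv ℬ).toLinearMap

theorem gradedProj_apply (i : ι) (x : H) : gradedProj ℬ i x = DirectSum.decompose ℬ x i := rfl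

theorem gradedProj_mem (i : ι) (x : H) : gradedProj ℬ i x ∈ ℬ i := (DirectSum.decompose ℬ x i).2

variable {ℬ}

theorem gradedProj_of_mem_same {i : ι} {x : H} (hx : x ∈ ℬ i) : gradedProj ℬ i x = x :=
  DirectSum.decompose_of_mem_same ℬ hx

theorem gradedProj_of_mem_ne {i j : ι} {x : H} (hx : x ∈ ℬ i) (hij : i ≠ j) :
    gradedProj ℬ j x = 0 :=
  DirectSum.decompose_of_mem_ne ℬ hx hij

theorem Submodule.isHomogeneous_of_eq_iSup_inf {J : Submodule k H} (hJ : J = ⨆ i, J ⊓ ℬ i) :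
    J.IsHomogeneous ℬ := by
  intro j x hx
  rw [← gradedProj_apply]
  suffices J ≤ J.comap (gradedProj ℬ j) from this hx
  conv_lhs => rw [hJ]
  refine iSup_le fun i y hy => ?_
  obtain ⟨hyJ, hyi⟩ := Submodule.mem_inf.1 hy
  by_cases hij : i = j
  · subst hij
    simpa [gradedProj_of_mem_same hyi] using hyJ
  · simp [gradedProj_of_mem_ne hyi hij]

end GradedProjections

section TensorGrading

variable {k H : Type*} [CommRing k] [AddCommGroup H] [Module k H]

noncomputable def tensorGrade (ℬ : ℕ → Submodule k H) (n : ℕ) : Submodule k (H ⊗[k] H) :=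
  ⨆ p : {p : ℕ × ℕ // p.1 + p.2 = n}, subTmul (ℬ p.1.1) (ℬ p.1.2)

theorem tensorGrade_le_iff {ℬ : ℕ → Submodule k H} {n : ℕ} {N : Submodule k (H ⊗[k] H)} :
    tensorGrade ℬ n ≤ N ↔ ∀ p q, p + q = n → ∀ a ∈ ℬ p, ∀ b ∈ ℬ q, a ⊗ₜ[k] b ∈ N := by
  simp only [tensorGrade, iSup_le_iff, subTmul_le_iff, Subtype.forall, Prod.forall]

variable (ℬ : ℕ → Submodule k H) [DirectSum.Decomposition ℬ]

noncomputable def gradedProjBelow (n : ℕ) : H →ₗ[k] H :=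
  ∑ p ∈ Finset.range n, gradedProj ℬ p

variable {ℬ}

theorem gradedProjBelow_of_mem_of_lt {n p : ℕ} {x : H} (hx : x ∈ ℬ p) (hp : p < n) :
    gradedProjBelow ℬ n x = x := by
  rw [gradedProjBelow, LinearMap.sum_apply,
    Finset.sum_eq_single_of_mem p (Finset.mem_range.2 hp)
      fun q _ hqp => gradedProj_of_mem_ne hx (Ne.symm hqp),
    gradedProj_of_mem_same hx]

theorem rTensor_gradedProjBelow_of_mem_tensorGrade {n : ℕ} {t : H ⊗[k] H}
    (ht : t ∈ tensorGrade ℬ n) : (gradedProjBelow ℬ (n + 1)).rTensor H t = t := by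
  refine tensorGrade_le_iff (N := LinearMap.eqLocus ((gradedProjBelow ℬ (n + 1)).rTensor H)
    LinearMap.id).2 (fun p q hpq a ha b _ => ?_) ht
  simp [LinearMap.mem_eqLocus, gradedProjBelow_of_mem_of_lt ha (by omega : p < n + 1)]

theorem rTensor_gradedProj_mem_subTmul {n : ℕ} {t : H ⊗[k] H} (ht : t ∈ tensorGrade ℬ n) :
    (gradedProj ℬ n).rTensor H t ∈ subTmul (ℬ n) (ℬ 0) := by
  refine tensorGrade_le_iff (N := (subTmul (ℬ n) (ℬ 0)).comap _).2
    (fun p q hpq a ha b hb => ?_) ht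
  by_cases hpn : p = n
  · subst hpn
    obtain rfl : q = 0 := by omega
    simpa [gradedProj_of_mem_same ha] using tmul_mem_subTmul ha hb
  · simp [gradedProj_of_mem_ne ha hpn]

end TensorGrading

section Bialgebra

variable {k H : Type*} [CommRing k] [Ring H] [Bialgebra k H]
  {ℬ : ℕ → Submodule k H} [DirectSum.Decomposition ℬ]

theorem rTensor_gradedProj_comul (hconn : ℬ 0 = Submodule.span k {(1 : H)}) {n : ℕ} {x : H}
    (hx : x ∈ ℬ n) (hΔx : Coalgebra.comul (R := k) x ∈ tensorGrade ℬ n) :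
    (gradedProj ℬ n).rTensor H (Coalgebra.comul (R := k) x) = x ⊗ₜ[k] (1 : H) := by
  have hmem := rTensor_gradedProj_mem_subTmul hΔx
  rw [hconn] at hmem
  obtain ⟨y, -, hy⟩ := subTmul_span_singleton_le _ _ hmem
  set contract : H ⊗[k] H →ₗ[k] H :=
    (TensorProduct.rid k H).toLinearMap ∘ₗ Coalgebra.counit.lTensor H
  have hcomm : ∀ t, contract ((gradedProj ℬ n).rTensor H t) = gradedProj ℬ n (contract t) := by
    intro t
    induction t using TensorProduct.induction_on <;> simp_all [contract]
  have hyx : y = x := by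
    simpa [contract, ← hy, Coalgebra.lTensor_counit_comul, gradedProj_of_mem_same hx]
      using hcomm (Coalgebra.comul x)
  simpa [hyx] using hy.symm

theorem rTensor_gradedProjBelow_comul (hconn : ℬ 0 = Submodule.span k {(1 : H)}) {n : ℕ} {x : H}
    (hx : x ∈ ℬ n) (hΔx : Coalgebra.comul (R := k) x ∈ tensorGrade ℬ n) :
    (gradedProjBelow ℬ n).rTensor H (Coalgebra.comul (R := k) x) =
      Coalgebra.comul (R := k) x - x ⊗ₜ[k] (1 : H) := by
  have hsucc : gradedProjBelow ℬ (n + 1) = gradedProjBelow ℬ n + gradedProj ℬ n :=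
    Finset.sum_range_succ _ n
  rw [← rTensor_gradedProj_comul hconn hx hΔx, eq_sub_iff_add_eq, ← LinearMap.add_apply,
    ← LinearMap.rTensor_add, ← hsucc, rTensor_gradedProjBelow_of_mem_tensorGrade hΔx]

end Bialgebra

section BirkhoffRecursion

variable {k H K : Type*} [CommRing k] [Ring H] [Bialgebra k H] [Ring K] [Algebra k K]
  {ℬ : ℕ → Submodule k H} [DirectSum.Decomposition ℬ] {J : Submodule k H}

theorem inf_le_ker_of_birkhoff_recursion (hconn : ℬ 0 = Submodule.span k {(1 : H)})
    (hgraded : ∀ n, ∀ x ∈ ℬ n, Coalgebra.comul (R := k) x ∈ tensorGrade ℬ n)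
    (hJ : J.IsHomogeneous ℬ)
    (hΔJ : ∀ x ∈ J, Coalgebra.comul (R := k) x ∈ subTmul J ⊤ ⊔ subTmul ⊤ J)
    (hεJ : ∀ x ∈ J, Coalgebra.counit (R := k) x = 0)
    (T : K →ₗ[k] K) (φ : H →ₐ[k] K) (hφJ : J ≤ LinearMap.ker φ.toLinearMap)
    (φm : H →ₗ[k] K)
    (hrec : ∀ x ∈ LinearMap.ker (Coalgebra.counit (R := k) (A := H)),
      φm x = -T (φ x + LinearMap.mul' k K
        ((map φm φ.toLinearMap)
          (Coalgebra.comul (R := k) x - x ⊗ₜ[k] (1 : H) - (1 : H) ⊗ₜ[k] x))))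
    (n : ℕ) : J ⊓ ℬ n ≤ LinearMap.ker φm := by
  induction n using Nat.strong_induction_on with
  | _ n ih =>
  rintro x ⟨hxJ, hxn⟩
  have hφx : φ x = 0 := hφJ hxJ
  have hbelow : J ≤ LinearMap.ker (φm ∘ₗ gradedProjBelow ℬ n) := fun a ha => by
    simp only [LinearMap.mem_ker, LinearMap.comp_apply, gradedProjBelow, LinearMap.sum_apply,
      map_sum]
    exact Finset.sum_eq_zero fun p hp =>
      ih p (Finset.mem_range.1 hp) ⟨hJ p ha, gradedProj_mem ℬ p a⟩
  have hreduced : map φm φ.toLinearMap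
      (Coalgebra.comul (R := k) x - x ⊗ₜ[k] (1 : H) - (1 : H) ⊗ₜ[k] x) ∈
        LinearMap.ker (LinearMap.mul' k K) := by
    rw [← rTensor_gradedProjBelow_comul hconn hxn (hgraded n x hxn), map_sub,
      LinearMap.map_rTensor]
    refine sub_mem (subTmul_sup_subTmul_le_ker_mul'_map hbelow hφJ (hΔJ x hxJ)) ?_
    simp [hφx]
  rw [LinearMap.mem_ker, hrec x (hεJ x hxJ), hφx, LinearMap.mem_ker.1 hreduced]
  simp

end BirkhoffRecursion

theorem birkhoff_decomposition_compatible_with_hopf_ideal_general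
    {k H K : Type*} [Field k] [CommRing H] [HopfAlgebra k H]
    [CommRing K] [Algebra k K]
    (ℬ : ℕ → Submodule k H)
    (hinternal : DirectSum.IsInternal ℬ)
    (hconn : ℬ 0 = Submodule.span k {(1 : H)})
    (hgraded : ∀ n, ∀ x ∈ ℬ n,
      (Coalgebra.comul (R := k) x : H ⊗[k] H) ∈
        ⨆ p : {p : ℕ × ℕ // p.1 + p.2 = n}, subTmul (ℬ p.1.1) (ℬ p.1.2))
    -- the splitting K = K₋ ⊕ K₊ with Rota–Baxter projection T
    (T : K →ₗ[k] K)
    -- the graded Hopf ideal I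
    (I : Ideal H)
    (hIgr : I.restrictScalars k = ⨆ n, I.restrictScalars k ⊓ ℬ n)
    (hΔI : ∀ x ∈ I, (Coalgebra.comul (R := k) x : H ⊗[k] H) ∈
        subTmul (I.restrictScalars k) (⊤ : Submodule k H) ⊔
        subTmul (⊤ : Submodule k H) (I.restrictScalars k))
    (hεI : ∀ x ∈ I, Coalgebra.counit (R := k) x = (0 : k))
    -- the character φ, vanishing on I, and its Birkhoff negative part φ₋
    (φ : H →ₐ[k] K) (hφI : ∀ x ∈ I, φ x = 0)
    (φm : H →ₗ[k] K)
    (hrec : ∀ x ∈ LinearMap.ker (Coalgebra.counit (R := k) (A := H)),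
      φm x = -T (φ x + LinearMap.mul' k K
        ((TensorProduct.map φm φ.toLinearMap)
          (Coalgebra.comul (R := k) x - x ⊗ₜ[k] (1 : H) - (1 : H) ⊗ₜ[k] x)))) :
    (∀ x ∈ I, φm x = 0) ∧
    (∀ x ∈ I, conv φm φ.toLinearMap x = 0) := by
  let := hinternal.chooseDecomposition
  have hφmI : I.restrictScalars k ≤ LinearMap.ker φm := by
    rw [hIgr]
    exact iSup_le <| inf_le_ker_of_birkhoff_recursion hconn hgraded
      (Submodule.isHomogeneous_of_eq_iSup_inf hIgr) hΔI hεI T φ hφI φm hrec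
  exact ⟨fun x hx => hφmI hx,
    fun x hx => subTmul_sup_subTmul_le_ker_mul'_map hφmI hφI (hΔI x hx)⟩

/-- Compatibility of Hopf ideals with the Birkhoff decomposition:
if `φ : H → K` vanishes on a graded Hopf ideal `I`, then both parts `φ₋` and
`φ₊ = φ₋ * φ` of its Birkhoff decomposition vanish on `I`. -/
theorem birkhoff_decomposition_compatible_with_hopf_ideal
    {k H K : Type*} [Field k] [CommRing H] [HopfAlgebra k H]
    [CommRing K] [Algebra k K]
    (ℬ : ℕ → Submodule k H)
    (hinternal : DirectSum.IsInternal ℬ)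
    (hconn : ℬ 0 = Submodule.span k {(1 : H)})
    (hgraded : ∀ n, ∀ x ∈ ℬ n,
      (Coalgebra.comul (R := k) x : H ⊗[k] H) ∈
        ⨆ p : {p : ℕ × ℕ // p.1 + p.2 = n}, subTmul (ℬ p.1.1) (ℬ p.1.2))
    -- the splitting K = K₋ ⊕ K₊ with Rota–Baxter projection T
    (T : K →ₗ[k] K)
    (hT : T ∘ₗ T = T)
    (hKneg : ∀ a ∈ LinearMap.range T, ∀ b ∈ LinearMap.range T, a * b ∈ LinearMap.range T)
    (hKpos : ∀ a ∈ LinearMap.ker T, ∀ b ∈ LinearMap.ker T, a * b ∈ LinearMap.ker T)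
    (hT1 : T (1 : K) = 0)
    (hRB : ∀ a b : K, T a * T b = T (T a * b + a * T b - a * b))
    -- the graded Hopf ideal I
    (I : Ideal H)
    (hIgr : I.restrictScalars k = ⨆ n, I.restrictScalars k ⊓ ℬ n)
    (hΔI : ∀ x ∈ I, (Coalgebra.comul (R := k) x : H ⊗[k] H) ∈
        subTmul (I.restrictScalars k) (⊤ : Submodule k H) ⊔
        subTmul (⊤ : Submodule k H) (I.restrictScalars k))
    (hεI : ∀ x ∈ I, Coalgebra.counit (R := k) x = (0 : k))
    (hSI : ∀ x ∈ I, HopfAlgebra.antipode (R := k) x ∈ I)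
    -- the character φ, vanishing on I, and its Birkhoff negative part φ₋
    (φ : H →ₐ[k] K) (hφI : ∀ x ∈ I, φ x = 0)
    (φm : H →ₗ[k] K)
    (hφm1 : φm (1 : H) = 1)
    (hrec : ∀ x ∈ LinearMap.ker (Coalgebra.counit (R := k) (A := H)),
      φm x = -T (φ x + LinearMap.mul' k K
        ((TensorProduct.map φm φ.toLinearMap)
          (Coalgebra.comul (R := k) x - x ⊗ₜ[k] (1 : H) - (1 : H) ⊗ₜ[k] x)))) :
    (∀ x ∈ I, φm x = 0) ∧
    (∀ x ∈ I, conv φm φ.toLinearMap x = 0) :=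
  birkhoff_decomposition_compatible_with_hopf_ideal_general ℬ hinternal hconn hgraded T I hIgr hΔI
    hεI φ hφI φm hrec
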